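/- arXiv:1112.5892 — 3 statements merged into one kernel-verified Lean document; each statement's English description precedes it below -/
import Mathlib

section
/- Let G be a finite non-cyclic group and H a maximal subgroup of G with σ(H) > σ(G). Then H belongs to every minimal cover of G, i.e. every family of σ(G) proper subgroups of G whose union is G contains H as a member. -/
/-- A cover of a group `G`: a finite family of proper subgroups whose union is all of `G`. -/
def IsCover {G : Type*} [Group G] (𝒮 : Finset (Subgroup G)) : Prop :=
  (∀ H ∈ 𝒮, H ≠ ⊤) ∧ ∀ g : G, ∃ H ∈ 𝒮, g ∈ H

/-- `groupSigma G` is the least cardinality of a cover of `G`, and `⊤` if no cover exists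
(e.g. if `G` is cyclic). -/
noncomputable def groupSigma (G : Type*) [Group G] : ℕ∞ :=
  sInf {n : ℕ∞ | ∃ 𝒮 : Finset (Subgroup G), IsCover 𝒮 ∧ (𝒮.card : ℕ∞) = n}

/-!
If the maximal subgroup `H` is missing from a cover `𝒮` of `G`, no member of `𝒮` contains `H`,
so the intersections `K ∩ H`, `K ∈ 𝒮`, are proper subgroups of `H` covering `H`; hence
`σ(H) ≤ |𝒮|`.
-/

section

variable {G : Type*} [Group G]

theorem groupSigma_le_card {𝒮 : Finset (Subgroup G)} (h𝒮 : IsCover 𝒮) :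
    groupSigma G ≤ 𝒮.card :=
  sInf_le ⟨𝒮, h𝒮, rfl⟩

theorem IsCover.image_subgroupOf {𝒮 : Finset (Subgroup G)} (h𝒮 : IsCover 𝒮)
    {H : Subgroup G} [DecidableEq (Subgroup H)] (hH : ∀ K ∈ 𝒮, ¬ H ≤ K) :
    IsCover (𝒮.image (·.subgroupOf H)) := by
  refine ⟨?_, fun h => ?_⟩
  · simp only [Finset.mem_image, forall_exists_index, and_imp, forall_apply_eq_imp_iff₂,
      ne_eq, Subgroup.subgroupOf_eq_top]
    exact hH
  · obtain ⟨K, hK, hhK⟩ := h𝒮.2 h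
    exact ⟨K.subgroupOf H, Finset.mem_image_of_mem _ hK, hhK⟩

theorem groupSigma_subgroup_le_card {𝒮 : Finset (Subgroup G)} (h𝒮 : IsCover 𝒮)
    {H : Subgroup G} (hH : ∀ K ∈ 𝒮, ¬ H ≤ K) : groupSigma H ≤ 𝒮.card := by
  classical
  calc groupSigma H ≤ (𝒮.image (·.subgroupOf H)).card :=
        groupSigma_le_card (h𝒮.image_subgroupOf hH)
    _ ≤ 𝒮.card := by exact_mod_cast Finset.card_image_le

end

theorem maximal_mem_minimal_cover_general
    {G : Type*} [Group G]
    (H : Subgroup G) (hmax : IsCoatom H) (hσ : groupSigma G < groupSigma ↥H) :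
    ∀ 𝒮 : Finset (Subgroup G), IsCover 𝒮 → (𝒮.card : ℕ∞) = groupSigma G → H ∈ 𝒮 := by
  intro 𝒮 h𝒮 hcard
  by_contra hH
  have hnot_le : ∀ K ∈ 𝒮, ¬ H ≤ K := fun K hK hHK =>
    h𝒮.1 K hK (hmax.le_iff.mp hHK |>.resolve_right (by rintro rfl; exact hH hK))
  exact (groupSigma_subgroup_le_card h𝒮 hnot_le).not_gt (hcard ▸ hσ)

/-- If `H` is a maximal subgroup of a finite non-cyclic group `G` with `σ(H) > σ(G)`, then `H`
belongs to every minimal cover of `G`. -/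
theorem maximal_mem_minimal_cover
    {G : Type*} [Group G] [Finite G] (hG : ¬ IsCyclic G)
    (H : Subgroup G) (hmax : IsCoatom H) (hσ : groupSigma G < groupSigma ↥H) :
    ∀ 𝒮 : Finset (Subgroup G), IsCover 𝒮 → (𝒮.card : ℕ∞) = groupSigma G → H ∈ 𝒮 :=
  maximal_mem_minimal_cover_general H hmax hσ
end

section
/- Let H be a finite group and V a finite H-module (a finite abelian group on which H acts by automorphisms) with C_V(H) = 0. If σ(H) ≥ 2|V|, then the first cohomology group H¹(H, V) is trivial. -/
/-!
Suppose a cocycle `d` is not a coboundary. For each `v : V` the elements `g` with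
`d g = g • v - v` form a subgroup, proper because `d` is not the coboundary of `v`. If `g` lies
in none of them, then `v ↦ g • v - v` misses `d g`, so by finiteness it is not injective and `g`
fixes some `w ≠ 0`, whose stabilizer is proper because `C_V(H) = 0`. These
`|V| + (|V| - 1) < 2|V|` subgroups cover `H`, contradicting `σ(H) ≥ 2|V|`.
-/

theorem groupSigma_le_card_s9 {G ι : Type*} [Group G] [Finite ι] (K : ι → Subgroup G)
    (hK : ∀ i, K i ≠ ⊤) (hcover : ∀ g : G, ∃ i, g ∈ K i) :
    groupSigma G ≤ Nat.card ι := by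
  classical
  have := Fintype.ofFinite ι
  have hcover' : IsCover (Finset.univ.image K) :=
    ⟨by simpa using hK, fun g ↦ by simpa using hcover g⟩
  calc groupSigma G ≤ (Finset.univ.image K).card := sInf_le ⟨_, hcover', rfl⟩
    _ ≤ Nat.card ι := by
      rw [Nat.card_eq_fintype_card]
      exact_mod_cast Finset.card_image_le

section Cocycle

variable {H V : Type*} [Group H] [AddCommGroup V] [DistribMulAction H V]

theorem cocycle_map_one {d : H → V} (hd : ∀ g h : H, d (g * h) = d g + g • d h) : d 1 = 0 := by
  simpa using hd 1 1

def coboundaryAgreement (d : H → V) (hd : ∀ g h : H, d (g * h) = d g + g • d h) (v : V) :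
    Subgroup H where
  carrier := {g | d g = g • v - v}
  one_mem' := by simp [cocycle_map_one hd]
  mul_mem' {a b} ha hb := by
    simp only [Set.mem_ofPred_eq] at ha hb ⊢
    rw [hd, ha, hb, smul_sub, mul_smul]
    abel
  inv_mem' {a} ha := by
    simp only [Set.mem_ofPred_eq] at ha ⊢
    have hinv : a • d a⁻¹ = -d a := by
      have := hd a a⁻¹
      rw [mul_inv_cancel, cocycle_map_one hd] at this
      exact eq_neg_of_add_eq_zero_right this.symm
    rw [← inv_smul_smul a (d a⁻¹), hinv, ha, neg_sub, smul_sub, inv_smul_smul]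

end Cocycle

theorem exists_ne_zero_smul_eq_of_forall_ne {H V : Type*} [Monoid H] [AddCommGroup V] [Finite V]
    [DistribMulAction H V] {g : H} {x : V} (hx : ∀ v : V, x ≠ g • v - v) :
    ∃ w : V, w ≠ 0 ∧ g • w = w := by
  have hninj : ¬ Function.Injective (fun v : V ↦ g • v - v) := fun hinj ↦
    let ⟨v, hv⟩ := Finite.surjective_of_injective hinj x
    hx v hv.symm
  obtain ⟨v, w, hvw, hne⟩ := Function.not_injective_iff.mp hninj
  refine ⟨v - w, sub_ne_zero_of_ne hne, ?_⟩
  rw [smul_sub, sub_eq_sub_iff_sub_eq_sub]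
  exact hvw

theorem H1_eq_zero_of_two_card_le_sigma_general
    {H V : Type*} [Group H] [AddCommGroup V] [Finite V] [DistribMulAction H V]
    (hfix : ∀ v : V, (∀ h : H, h • v = v) → v = 0)
    (hσ : (2 * Nat.card V : ℕ∞) ≤ groupSigma H) :
    ∀ d : H → V, (∀ g h : H, d (g * h) = d g + g • d h) →
      ∃ v : V, ∀ g : H, d g = g • v - v := by
  intro d hd
  by_contra! hcon
  let K : V ⊕ {w : V // w ≠ 0} → Subgroup H :=
    Sum.elim (coboundaryAgreement d hd) fun w ↦ MulAction.stabilizer H w.1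
  have hproper : ∀ i, K i ≠ ⊤
    | .inl v, htop =>
      let ⟨g, hg⟩ := hcon v
      hg ((Subgroup.eq_top_iff' _).mp htop g)
    | .inr w, htop => w.2 (hfix w fun h ↦ MulAction.mem_stabilizer_iff.mp
      ((Subgroup.eq_top_iff' _).mp htop h))
  have hcover : ∀ g : H, ∃ i, g ∈ K i := fun g ↦ by
    by_cases hg : ∃ v, d g = g • v - v
    · obtain ⟨v, hv⟩ := hg
      exact ⟨.inl v, hv⟩
    · obtain ⟨w, hw0, hw⟩ := exists_ne_zero_smul_eq_of_forall_ne (not_exists.mp hg)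
      exact ⟨.inr ⟨w, hw0⟩, hw⟩
  have hcard : Nat.card (V ⊕ {w : V // w ≠ 0}) < 2 * Nat.card V := by
    have := Finite.card_subtype_lt (p := fun w : V ↦ w ≠ 0) (not_not.mpr rfl)
    rw [Nat.card_sum]
    omega
  exact hcard.not_ge (by exact_mod_cast hσ.trans (groupSigma_le_card_s9 K hproper hcover))

/-- If `H` is a finite group and `V` a finite `H`-module with `C_V(H) = 0` and
`σ(H) ≥ 2|V|`, then `H¹(H,V) = 0`: every `1`-cocycle `d : H → V` is a `1`-coboundary. -/
theorem H1_eq_zero_of_two_card_le_sigma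
    {H V : Type*} [Group H] [Finite H] [AddCommGroup V] [Finite V] [DistribMulAction H V]
    (hfix : ∀ v : V, (∀ h : H, h • v = v) → v = 0)
    (hσ : (2 * Nat.card V : ℕ∞) ≤ groupSigma H) :
    ∀ d : H → V, (∀ g h : H, d (g * h) = d g + g • d h) →
      ∃ v : V, ∀ g : H, d g = g • v - v :=
  H1_eq_zero_of_two_card_le_sigma_general hfix hσ
end

section
/- The symmetric group Sym(12) on 12 letters satisfies σ(Sym(12)) ≥ 67. -/
open Equiv Equiv.Perm MulAction
open scoped Pointwise

theorem card_le_groupSigma_of_forall_eq_top {G ι : Type*} [Group G] (s : Finset ι) (g : ι → G)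
    (hg : ∀ i ∈ s, ∀ j ∈ s, i ≠ j → ∀ H : Subgroup G, g i ∈ H → g j ∈ H → H = ⊤) :
    (s.card : ℕ∞) ≤ groupSigma G := by
  refine le_sInf ?_
  rintro _ ⟨𝒮, ⟨hproper, hcover⟩, rfl⟩
  choose F hF𝒮 hgF using fun i => hcover (g i)
  refine Nat.cast_le.2 (Finset.card_le_card_of_injOn F (fun i _ => hF𝒮 i) ?_)
  intro i hi j hj hij
  by_contra hne
  exact hproper _ (hF𝒮 i) (hg i hi j hj hne _ (hgF i) (hij ▸ hgF j))

theorem mem_zpowers_of_pow_two_of_pow_three_of_pow_seven {G : Type*} [Group G] {a b c : G}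
    (hab : Commute a b) (hac : Commute a c) (hbc : Commute b c)
    (ha : a ^ 2 = 1) (hb : b ^ 3 = 1) (hc : c ^ 7 = 1) :
    a ∈ Subgroup.zpowers (a * b * c) ∧ b ∈ Subgroup.zpowers (a * b * c) ∧
      c ∈ Subgroup.zpowers (a * b * c) := by
  have hpow (n : ℕ) : (a * b * c) ^ n = a ^ (n % 2) * b ^ (n % 3) * c ^ (n % 7) := by
    rw [(hac.mul_left hbc).mul_pow, hab.mul_pow, pow_eq_pow_mod n ha, pow_eq_pow_mod n hb,
      pow_eq_pow_mod n hc]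
  -- `21`, `28`, `36` are the idempotents of `ℤ/42 = ℤ/2 × ℤ/3 × ℤ/7`.
  refine ⟨?_, ?_, ?_⟩
  · simpa [hpow] using Subgroup.npow_mem_zpowers (a * b * c) 21
  · simpa [hpow] using Subgroup.npow_mem_zpowers (a * b * c) 28
  · simpa [hpow] using Subgroup.npow_mem_zpowers (a * b * c) 36

namespace Equiv.Perm

variable {α : Type*} [Fintype α] [DecidableEq α] {G : Subgroup (Perm α)}

theorem isPretransitive_of_isCycle_of_support_eq_univ {c : Perm α} (hc : c.IsCycle)
    (hcG : c ∈ G) (hsupp : c.support = Finset.univ) : IsPretransitive G α := by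
  refine ⟨fun a b => ?_⟩
  have hmem (x : α) : c x ≠ x := mem_support.1 (hsupp ▸ Finset.mem_univ x)
  obtain ⟨i, hi⟩ := hc.exists_zpow_eq (hmem a) (hmem b)
  exact ⟨⟨c, hcG⟩ ^ i, hi⟩

theorem isPreprimitive_of_isCycle_mem [IsPretransitive G α] {g : Perm α} (hg : g.IsCycle)
    (hgG : g ∈ G) (hp : g.support.card.Prime) (hα : Fintype.card α < 2 * g.support.card) :
    IsPreprimitive G α := by
  obtain ⟨a, ha⟩ : g.support.Nonempty := Finset.card_pos.1 hp.pos
  let g' : G := ⟨g, hgG⟩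
  refine IsPreprimitive.of_isTrivialBlock_base a fun {B} haB hB => ?_
  by_cases hgB : g' • B = B
  · right
    have hsupp : (g.support : Set α) ⊆ B := by
      intro b hb
      obtain ⟨i, rfl⟩ := hg.exists_zpow_eq (mem_support.1 ha) (mem_support.1 hb)
      rw [← (zpow_mem (show g' ∈ stabilizer G B from hgB) i : g' ^ i • B = B)]
      exact Set.smul_mem_smul_set haB
    refine hB.eq_univ_of_card_lt ?_
    calc Nat.card α = Fintype.card α := Nat.card_eq_fintype_card
      _ < 2 * g.support.card := hα
      _ ≤ B.ncard * 2 := by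
        rw [mul_comm, ← Set.ncard_coe_finset]
        exact Nat.mul_le_mul_right 2 (Set.ncard_le_ncard hsupp)
  · left
    -- A point of `B` fixed by `g`, or a point `g ^ k • a ≠ a` of `B` (so that `p ∤ k`),
    -- would make `g` stabilise `B`.
    suffices ∀ c ∈ B, c = a from fun x hx y hy => (this x hx).trans (this y hy).symm
    intro c hc
    by_contra hca
    refine hgB ?_
    by_cases hgc : g c = c
    · exact hB.smul_eq_of_mem hc (show g c ∈ B by rwa [hgc])
    obtain ⟨k, hk⟩ := hg.exists_pow_eq (mem_support.1 ha) hgc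
    have hk_stab : g' ^ k ∈ stabilizer G B :=
      hB.smul_eq_of_mem haB (show (g ^ k) a ∈ B by rwa [hk])
    have hcop : k.Coprime (orderOf g') := by
      rw [Subgroup.orderOf_mk, hg.orderOf, Nat.coprime_comm, hp.coprime_iff_not_dvd]
      intro hdvd
      rw [← hg.orderOf] at hdvd
      rw [orderOf_dvd_iff_pow_eq_one.1 hdvd] at hk
      exact hca hk.symm
    obtain ⟨m, hm⟩ := exists_pow_eq_self_of_coprime hcop
    rw [← mem_stabilizer_iff, ← hm]
    exact pow_mem hk_stab m

theorem eq_top_of_isSwap_mem_of_isCycle_mem [IsPretransitive G α] {τ g : Perm α}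
    (hτ : τ.IsSwap) (hτG : τ ∈ G) (hg : g.IsCycle) (hgG : g ∈ G) (hp : g.support.card.Prime)
    (hα : Fintype.card α < 2 * g.support.card) : G = ⊤ :=
  subgroup_eq_top_of_isPreprimitive_of_isSwap_mem (isPreprimitive_of_isCycle_mem hg hgG hp hα)
    τ hτ hτG

theorem _root_.MulAction.IsFixedBlock.disjoint_or_support_subset {S : Set α}
    (hS : IsFixedBlock G S) {c : Perm α} (hc : c.IsCycle) (hcG : c ∈ G) :
    _root_.Disjoint S c.support ∨ (c.support : Set α) ⊆ S := by
  refine or_iff_not_imp_left.2 fun h => ?_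
  obtain ⟨a, haS, ha⟩ := Set.not_disjoint_iff.1 h
  intro b hb
  obtain ⟨i, rfl⟩ := hc.exists_zpow_eq (mem_support.1 ha) (mem_support.1 hb)
  rw [← hS (⟨c, hcG⟩ ^ i)]
  exact Set.smul_mem_smul_set haS

theorem exists_isFixedBlock_disjoint_support (hG : ¬ IsPretransitive G α) {c : Perm α}
    (hc : c.IsCycle) (hcG : c ∈ G) :
    ∃ S : Set α, IsFixedBlock G S ∧ S.Nonempty ∧ _root_.Disjoint S c.support := by
  obtain ⟨a, b, hab⟩ : ∃ a b : α, b ∉ orbit G a := by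
    by_contra! h
    exact hG ⟨fun a b => h a b⟩
  have hO : IsFixedBlock G (orbit G a) := IsFixedBlock.orbit a
  rcases hO.disjoint_or_support_subset hc hcG with h | h
  · exact ⟨_, hO, ⟨a, mem_orbit_self a⟩, h⟩
  · refine ⟨(orbit G a)ᶜ, fun g => ?_, ⟨b, hab⟩, disjoint_compl_left.mono_right h⟩
    rw [Set.smul_set_compl, hO g]

end Equiv.Perm

theorem List.support_formPerm_of_two_le_length {α : Type*} [Fintype α] [DecidableEq α]
    {l : List α} (hl : l.Nodup) (h2 : 2 ≤ l.length) : l.formPerm.support = l.toFinset :=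
  support_formPerm_of_nodup l hl (by rintro x rfl; simp at h2)

namespace Sym12

def quintuples : List (List (Fin 12)) := [
  [0,1,2,3,4], [0,2,1,3,5], [0,3,1,2,6], [0,4,1,2,5], [0,5,1,2,7], [0,6,1,2,4],
  [0,7,1,2,3], [0,8,1,2,9], [0,9,1,2,10], [0,10,1,2,8], [0,11,1,3,4], [1,2,0,3,8],
  [1,3,0,2,9], [1,4,0,2,7], [1,5,0,2,6], [1,6,0,2,8], [1,7,0,2,10], [1,8,0,2,4],
  [1,9,0,2,5], [1,10,0,2,3], [1,11,0,3,5], [2,3,0,1,11], [2,4,0,1,9], [2,5,0,1,8],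
  [2,6,0,1,7], [2,7,0,3,4], [2,8,0,3,6], [2,9,0,1,6], [2,10,0,1,4], [2,11,0,1,5],
  [3,4,0,1,10], [3,5,0,2,11], [3,6,0,4,5], [3,7,0,4,6], [3,8,0,4,7], [3,9,0,4,8],
  [3,10,0,4,9], [3,11,0,4,10], [4,5,0,1,3], [4,6,0,3,9], [4,7,0,3,10], [4,8,0,3,11],
  [4,9,0,3,7], [4,10,0,5,6], [4,11,0,1,2], [5,6,0,4,11], [5,7,0,6,8], [5,8,0,6,9],
  [5,9,0,6,7], [5,10,0,6,11], [5,11,0,7,8], [6,7,0,5,10], [6,8,0,5,11], [6,9,0,7,10],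
  [6,10,0,5,8], [6,11,0,5,7], [7,8,0,5,9], [7,9,0,8,10], [7,10,0,8,11], [7,11,0,6,10],
  [8,9,0,7,11], [8,10,0,9,11], [8,11,1,3,6], [9,10,1,2,11], [9,11,1,3,7], [10,11,0,7,9]]

def rest (l : List (Fin 12)) : List (Fin 12) := (List.finRange 12).filter (· ∉ l)

def perm237 (l : List (Fin 12)) : Perm (Fin 12) :=
  (l.take 2).formPerm * (l.drop 2).formPerm * (rest l).formPerm

def smallSets (l : List (Fin 12)) : Finset (Finset (Fin 12)) :=
  {(l.take 2).toFinset, (l.drop 2).toFinset, l.toFinset}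

theorem nodup_and_length_of_mem_quintuples : ∀ l ∈ quintuples, l.Nodup ∧ l.length = 5 := by
  decide

theorem nodup_map_smallSets :
    (quintuples.map fun l => (l.take 2).toFinset).Nodup ∧
      (quintuples.map fun l => (l.drop 2).toFinset).Nodup ∧
      (quintuples.map List.toFinset).Nodup := by
  decide

theorem mem_rest {l : List (Fin 12)} {a : Fin 12} : a ∈ rest l ↔ a ∉ l := by
  simp [rest]

theorem nodup_rest (l : List (Fin 12)) : (rest l).Nodup :=
  (List.nodup_finRange 12).filter _

section

variable {l : List (Fin 12)} (hl : l.Nodup) (hlen : l.length = 5)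
include hl hlen

theorem length_rest : (rest l).length = 7 := by
  have : (rest l).toFinset = l.toFinsetᶜ := by ext; simp [mem_rest]
  rw [← List.toFinset_card_of_nodup (nodup_rest l), this, Finset.card_compl,
    List.toFinset_card_of_nodup hl, hlen, Fintype.card_fin]

theorem card_toFinset_take_drop :
    (l.take 2).toFinset.card = 2 ∧ (l.drop 2).toFinset.card = 3 ∧ l.toFinset.card = 5 := by
  refine ⟨?_, ?_, ?_⟩ <;>
    simp [List.toFinset_card_of_nodup, hl, hl.sublist (l.take_sublist 2),
      hl.sublist (l.drop_sublist 2), hlen]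

theorem formPerm_mem_of_perm237_mem {H : Subgroup (Perm (Fin 12))} (hx : perm237 l ∈ H) :
    (l.take 2).formPerm ∈ H ∧ (l.drop 2).formPerm ∈ H ∧ (rest l).formPerm ∈ H := by
  have hA := hl.sublist (l.take_sublist 2)
  have hT := hl.sublist (l.drop_sublist 2)
  have hAT := (List.formPerm_disjoint_iff hA hT (by simp [hlen]) (by simp [hlen])).2
    (List.disjoint_take_drop hl le_rfl)
  have hAC := (List.formPerm_disjoint_iff hA (nodup_rest l) (by simp [hlen])
    (by simp [length_rest hl hlen])).2 fun a ha haC => mem_rest.1 haC (List.mem_of_mem_take ha)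
  have hTC := (List.formPerm_disjoint_iff hT (nodup_rest l) (by simp [hlen])
    (by simp [length_rest hl hlen])).2 fun a ha haC => mem_rest.1 haC (List.mem_of_mem_drop ha)
  obtain ⟨h2, h3, h7⟩ := mem_zpowers_of_pow_two_of_pow_three_of_pow_seven hAT.commute
    hAC.commute hTC.commute
    (by simpa [hlen] using List.formPerm_pow_length_eq_one_of_nodup _ hA)
    (by simpa [hlen] using List.formPerm_pow_length_eq_one_of_nodup _ hT)
    (by simpa [length_rest hl hlen] using
      List.formPerm_pow_length_eq_one_of_nodup _ (nodup_rest l))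
  exact ⟨Subgroup.zpowers_le.2 hx h2, Subgroup.zpowers_le.2 hx h3, Subgroup.zpowers_le.2 hx h7⟩

theorem isCycle_formPerm_take : (l.take 2).formPerm.IsCycle :=
  List.isCycle_formPerm (hl.sublist (l.take_sublist 2)) (by simp [hlen])

theorem isCycle_formPerm_drop : (l.drop 2).formPerm.IsCycle :=
  List.isCycle_formPerm (hl.sublist (l.drop_sublist 2)) (by simp [hlen])

theorem isCycle_formPerm_rest : (rest l).formPerm.IsCycle :=
  List.isCycle_formPerm (nodup_rest l) (by simp [length_rest hl hlen])

theorem support_formPerm_take : (l.take 2).formPerm.support = (l.take 2).toFinset :=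
  List.support_formPerm_of_two_le_length (hl.sublist (l.take_sublist 2)) (by simp [hlen])

theorem support_formPerm_drop : (l.drop 2).formPerm.support = (l.drop 2).toFinset :=
  List.support_formPerm_of_two_le_length (hl.sublist (l.drop_sublist 2)) (by simp [hlen])

theorem support_formPerm_rest : (rest l).formPerm.support = (rest l).toFinset :=
  List.support_formPerm_of_two_le_length (nodup_rest l) (by simp [length_rest hl hlen])

theorem card_support_formPerm_rest : (rest l).formPerm.support.card = 7 := by
  rw [support_formPerm_rest hl hlen, List.toFinset_card_of_nodup (nodup_rest l),
    length_rest hl hlen]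

theorem card_le_of_mem_smallSets {F : Finset (Fin 12)} (hF : F ∈ smallSets l) : F.card ≤ 5 := by
  obtain ⟨hA, hT, hU⟩ := card_toFinset_take_drop hl hlen
  simp only [smallSets, Finset.mem_insert, Finset.mem_singleton] at hF
  rcases hF with rfl | rfl | rfl <;> omega

theorem eq_top_of_perm237_mem {H : Subgroup (Perm (Fin 12))} [IsPretransitive H (Fin 12)]
    (hx : perm237 l ∈ H) : H = ⊤ := by
  obtain ⟨hA, -, hC⟩ := formPerm_mem_of_perm237_mem hl hlen hx
  have hswap : (l.take 2).formPerm.IsSwap := by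
    rw [← card_support_eq_two, support_formPerm_take hl hlen, (card_toFinset_take_drop hl hlen).1]
  have h7 := card_support_formPerm_rest hl hlen
  exact eq_top_of_isSwap_mem_of_isCycle_mem hswap hA (isCycle_formPerm_rest hl hlen) hC
    (by rw [h7]; norm_num) (by rw [h7, Fintype.card_fin]; norm_num)

theorem exists_mem_smallSets_of_isFixedBlock {H : Subgroup (Perm (Fin 12))}
    (hx : perm237 l ∈ H) {S : Set (Fin 12)} (hS : IsFixedBlock H S) (hne : S.Nonempty)
    (hdisj : Disjoint S (rest l).formPerm.support) : ∃ F ∈ smallSets l, S = F := by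
  obtain ⟨hA, hT, -⟩ := formPerm_mem_of_perm237_mem hl hlen hx
  have hSl (a) (ha : a ∈ S) : a ∈ l.take 2 ∨ a ∈ l.drop 2 := by
    have : a ∉ rest l := by
      simpa [support_formPerm_rest hl hlen] using Set.disjoint_left.1 hdisj ha
    rw [mem_rest, not_not, ← l.take_append_drop 2, List.mem_append] at this
    exact this
  rcases hS.disjoint_or_support_subset (isCycle_formPerm_take hl hlen) hA with hSA | hSA <;>
    rcases hS.disjoint_or_support_subset (isCycle_formPerm_drop hl hlen) hT with hST | hST <;>
    simp only [support_formPerm_take hl hlen, support_formPerm_drop hl hlen,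
      Set.disjoint_left, Set.subset_def, Finset.mem_coe, List.mem_toFinset] at hSA hST
  · obtain ⟨a, ha⟩ := hne
    exact ((hSl a ha).elim (hSA ha) (hST ha)).elim
  · refine ⟨(l.drop 2).toFinset, by simp [smallSets], Set.ext fun a => ?_⟩
    simp only [Finset.mem_coe, List.mem_toFinset]
    exact ⟨fun ha => (hSl a ha).resolve_left (hSA ha), hST a⟩
  · refine ⟨(l.take 2).toFinset, by simp [smallSets], Set.ext fun a => ?_⟩
    simp only [Finset.mem_coe, List.mem_toFinset]
    exact ⟨fun ha => (hSl a ha).resolve_right (hST ha), hSA a⟩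
  · refine ⟨l.toFinset, by simp [smallSets], Set.ext fun a => ?_⟩
    simp only [Finset.mem_coe, List.mem_toFinset]
    rw [← l.take_append_drop 2, List.mem_append]
    exact ⟨hSl a, fun h => h.elim (hSA a) (hST a)⟩

end

theorem nodup_quintuples : quintuples.Nodup :=
  nodup_map_smallSets.2.2.of_map _

theorem eq_of_mem_smallSets {l l' : List (Fin 12)} (hl : l ∈ quintuples) (hl' : l' ∈ quintuples)
    {F : Finset (Fin 12)} (hF : F ∈ smallSets l) (hF' : F ∈ smallSets l') : l = l' := by
  obtain ⟨hA, hT, hU⟩ := nodup_map_smallSets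
  obtain ⟨hl₁, hl₂⟩ := nodup_and_length_of_mem_quintuples l hl
  obtain ⟨hl'₁, hl'₂⟩ := nodup_and_length_of_mem_quintuples l' hl'
  have hcard := card_toFinset_take_drop hl₁ hl₂
  have hcard' := card_toFinset_take_drop hl'₁ hl'₂
  simp only [smallSets, Finset.mem_insert, Finset.mem_singleton] at hF hF'
  rcases hF with rfl | rfl | rfl <;> rcases hF' with h | h | h
  all_goals first
    | exact List.inj_on_of_nodup_map hA hl hl' h
    | exact List.inj_on_of_nodup_map hT hl hl' h
    | exact List.inj_on_of_nodup_map hU hl hl' h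
    | have := congrArg Finset.card h; omega

theorem eq_top_of_perm237_mem_of_perm237_mem {H : Subgroup (Perm (Fin 12))}
    {l l' : List (Fin 12)} (hl : l ∈ quintuples) (hl' : l' ∈ quintuples) (hne : l ≠ l')
    (hx : perm237 l ∈ H) (hx' : perm237 l' ∈ H) : H = ⊤ := by
  obtain ⟨hln, hlen⟩ := nodup_and_length_of_mem_quintuples l hl
  obtain ⟨hln', hlen'⟩ := nodup_and_length_of_mem_quintuples l' hl'
  by_contra hH
  have htrans : ¬ IsPretransitive H (Fin 12) := fun _ => hH (eq_top_of_perm237_mem hln hlen hx)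
  obtain ⟨S, hS, hSne, hSC⟩ := exists_isFixedBlock_disjoint_support htrans
    (isCycle_formPerm_rest hln hlen) (formPerm_mem_of_perm237_mem hln hlen hx).2.2
  obtain ⟨F, hF, rfl⟩ := exists_mem_smallSets_of_isFixedBlock hln hlen hx hS hSne hSC
  have hFC' : Disjoint (F : Set (Fin 12)) (rest l').formPerm.support := by
    refine (hS.disjoint_or_support_subset (isCycle_formPerm_rest hln' hlen')
      (formPerm_mem_of_perm237_mem hln' hlen' hx').2.2).resolve_right fun h => ?_
    have h7 := card_support_formPerm_rest hln' hlen' ▸ Finset.card_le_card (Finset.coe_subset.1 h)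
    have h5 := card_le_of_mem_smallSets hln hlen hF
    omega
  obtain ⟨F', hF', hFF'⟩ := exists_mem_smallSets_of_isFixedBlock hln' hlen' hx' hS hSne hFC'
  rw [Finset.coe_inj] at hFF'
  exact hne (eq_of_mem_smallSets hl hl' hF (hFF' ▸ hF'))

theorem eq_top_of_finRotate_mem_of_perm237_mem {H : Subgroup (Perm (Fin 12))}
    {l : List (Fin 12)} (hl : l ∈ quintuples) (hc : finRotate 12 ∈ H) (hx : perm237 l ∈ H) :
    H = ⊤ := by
  have := isPretransitive_of_isCycle_of_support_eq_univ (isCycle_finRotate_of_le (by norm_num))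
    hc (support_finRotate_of_le (by norm_num))
  exact eq_top_of_perm237_mem (nodup_and_length_of_mem_quintuples l hl).1
    (nodup_and_length_of_mem_quintuples l hl).2 hx

end Sym12

open Sym12

/-- The symmetric group on `12` letters satisfies `σ(Sym(12)) ≥ 67`. -/
theorem groupSigma_sym12 :
    (67 : ℕ∞) ≤ groupSigma (Equiv.Perm (Fin 12)) := by
  have hcard : (Finset.insertNone quintuples.toFinset).card = 67 := by
    rw [Finset.card_insertNone, List.toFinset_card_of_nodup nodup_quintuples]
    rfl
  have h := card_le_groupSigma_of_forall_eq_top (Finset.insertNone quintuples.toFinset)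
    (fun o => o.elim (finRotate 12) perm237) ?_
  · simpa [hcard] using h
  rintro (_ | l) hl (_ | l') hl' hne H hx hx'
  · exact absurd rfl hne
  · exact eq_top_of_finRotate_mem_of_perm237_mem (by simpa using hl') hx hx'
  · exact eq_top_of_finRotate_mem_of_perm237_mem (by simpa using hl) hx' hx
  · exact eq_top_of_perm237_mem_of_perm237_mem (by simpa using hl) (by simpa using hl')
      (fun h => hne (congrArg some h)) hx hx'
end
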